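/- arXiv:2206.15202 — 3 statements merged into one kernel-verified Lean document; each statement's English description precedes it below -/
import Mathlib

section
/- For every simple type σ, the cost-size interpretation domain ⟦σ⟧ = C_σ × S_σ, with C_σ = ℕ × F_σ and the orders defined by ((n,f),s) ≻ ((m,g),t) iff n > m, f ≥ g, s ⊒ t, and ((n,f),s) ≽ ((m,g),t) iff n ≥ m, f ≥ g, s ⊒ t, is a well-founded set: ≻ is well-founded and ≻ ∘ ≽ ⊆ ≻. -/
/-- A quasi-ordered set: a carrier together with a binary relation (the
quasi-order `⊒`). -/
structure QO where
  α : Type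
  ge : α → α → Prop

/-- Weak monotonicity of a function between quasi-ordered sets. -/
def WMono (A B : QO) (f : A.α → B.α) : Prop :=
  ∀ x y, A.ge x y → B.ge (f x) (f y)

/-- Product of quasi-ordered sets, ordered componentwise. -/
def prodQO (A B : QO) : QO :=
  ⟨A.α × B.α, fun p q => A.ge p.1 q.1 ∧ B.ge p.2 q.2⟩

/-- The space `A ⟹ B` of weakly monotonic functions, quasi-ordered pointwise. -/
def funQO (A B : QO) : QO :=
  ⟨{f : A.α → B.α // WMono A B f}, fun f g => ∀ x, B.ge (f.1 x) (g.1 x)⟩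

/-- Natural numbers quasi-ordered by `≥`. -/
def natQO : QO := ⟨ℕ, fun x y => x ≥ y⟩

/-- The one-element quasi-ordered set `unit`. -/
def unitQO : QO := ⟨PUnit, fun _ _ => True⟩

/-- `ℕ^k` ordered componentwise. -/
def vecQO (k : ℕ) : QO := ⟨Fin k → ℕ, fun x y => ∀ i, x i ≥ y i⟩

/-- Simple types over a set `B` of base types. -/
inductive Ty (B : Type) : Type
  | base : B → Ty B
  | arrow : Ty B → Ty B → Ty B

/-- The cost-functional and size quasi-ordered sets `(F_σ, S_σ)`:
`F_ι = unit`, `S_ι = ℕ^{K ι}`, `F_{σ⇒τ} = (F_σ × S_σ) ⟹ (ℕ × F_τ)`,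
`S_{σ⇒τ} = S_σ ⟹ S_τ`. -/
def FS {B : Type} (K : B → ℕ) : Ty B → QO × QO
  | .base b => (unitQO, vecQO (K b))
  | .arrow σ τ =>
      (funQO (prodQO (FS K σ).1 (FS K σ).2) (prodQO natQO (FS K τ).1),
       funQO (FS K σ).2 (FS K τ).2)

/-- The interpretation domain `⟦σ⟧ = (ℕ × F_σ) × S_σ`. -/
def Interp {B : Type} (K : B → ℕ) (σ : Ty B) : Type :=
  (ℕ × (FS K σ).1.α) × (FS K σ).2.α

/-- The weak order `≽` on `⟦σ⟧`: `((n,f),s) ≽ ((m,g),t)` iff `n ≥ m`,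
`f ≥ g` and `s ⊒ t`. -/
def succeq {B : Type} (K : B → ℕ) (σ : Ty B) (x y : Interp K σ) : Prop :=
  x.1.1 ≥ y.1.1 ∧ (FS K σ).1.ge x.1.2 y.1.2 ∧ (FS K σ).2.ge x.2 y.2

/-- The strict order `≻` on `⟦σ⟧`: `((n,f),s) ≻ ((m,g),t)` iff `n > m`,
`f ≥ g` and `s ⊒ t`. -/
def succ {B : Type} (K : B → ℕ) (σ : Ty B) (x y : Interp K σ) : Prop :=
  x.1.1 > y.1.1 ∧ (FS K σ).1.ge x.1.2 y.1.2 ∧ (FS K σ).2.ge x.2 y.2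

/-- Semantic application: `((n,f^c),f^s) · ((m,g^c),g^s) = ((n+m+k,h), f^s(g^s))`
where `(k,h) = f^c(g^c,g^s)`. -/
def semApp {B : Type} (K : B → ℕ) {σ τ : Ty B}
    (f : Interp K (Ty.arrow σ τ)) (x : Interp K σ) : Interp K τ :=
  let kh : ℕ × (FS K τ).1.α := f.1.2.1 (x.1.2, x.2)
  ((f.1.1 + x.1.1 + kh.1, kh.2), f.2.1 x.2)

lemma FS_trans {B : Type} (K : B → ℕ) (σ : Ty B) :
    Transitive (FS K σ).1.ge ∧ Transitive (FS K σ).2.ge := by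
  induction σ with
  | base b =>
    exact ⟨fun _ _ _ _ _ => trivial,
      fun x y z h1 h2 i => le_trans (h2 i) (h1 i)⟩
  | arrow σ τ ihσ ihτ =>
    refine ⟨fun f g h h1 h2 x => ?_, fun f g h h1 h2 x => ihτ.2 (h1 x) (h2 x)⟩
    exact ⟨le_trans (h2 x).1 (h1 x).1, ihτ.1 (h1 x).2 (h2 x).2⟩

/-- for every simple type `σ`, `(⟦σ⟧, ≻, ≽)` is a well-founded
set: `≻` is well-founded and `≻ ∘ ≽ ⊆ ≻`. -/
theorem interp_domain_wellfounded
    (B : Type) (K : B → ℕ) (hK : ∀ b, 1 ≤ K b) (σ : Ty B) :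
    WellFounded (fun x y : Interp K σ => succ K σ y x) ∧
      (∀ x y z : Interp K σ, succ K σ x y → succeq K σ y z → succ K σ x z) := by
  constructor
  · have h := (measure (fun x : Interp K σ => x.1.1)).wf
    exact Subrelation.wf (fun h' => h'.1) h
  · rintro x y z ⟨h1, h2, h3⟩ ⟨g1, g2, g3⟩
    exact ⟨lt_of_le_of_lt g1 h1, (FS_trans K σ).1 h2 g2, (FS_trans K σ).2 h3 g3⟩
end

section
/- Semantic application is strictly monotonic in its first argument with respect to the strict order: if 𝐟 ≻ 𝐟' in ⟦σ ⇒ τ⟧ and 𝐱 ≽ 𝐱' in ⟦σ⟧, then 𝐟 · 𝐱 ≻ 𝐟' · 𝐱' in ⟦τ⟧. -/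
/-- semantic application is strictly monotonic in its first
argument: `𝐟 ≻ 𝐟'` and `𝐱 ≽ 𝐱'` imply `𝐟·𝐱 ≻ 𝐟'·𝐱'`. -/
theorem semApp_strictly_monotonic_first
    (B : Type) (K : B → ℕ) (σ τ : Ty B)
    (f f' : Interp K (Ty.arrow σ τ)) (x x' : Interp K σ)
    (hf : succ K (Ty.arrow σ τ) f f') (hx : succeq K σ x x') :
    succ K τ (semApp K f x) (semApp K f' x') := by
  obtain ⟨hn, hfc, hfs⟩ := hf
  obtain ⟨hm, hgc, hgs⟩ := hx
  have hmono := f.1.2.2 (x.1.2, x.2) (x'.1.2, x'.2) ⟨hgc, hgs⟩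
  have hchain := hfc (x'.1.2, x'.2)
  refine ⟨?_, ?_, ?_⟩
  · exact Nat.add_lt_add_of_lt_of_le (Nat.add_lt_add_of_lt_of_le hn hm)
      (le_trans hchain.1 hmono.1)
  · exact (FS_trans K τ).1 hmono.2 hchain.2
  · exact (FS_trans K τ).2 (f.2.2 _ _ hgs) (hfs x'.2)
end

section
/- Innermost Compatibility Theorem: for an applicative simply-typed TRS R with interpretation ⟦·⟧_α into cost-size tuple algebras, if ⟦ℓ⟧_α ≻ ⟦r⟧_α for every rule ℓ → r ∈ R and every valuation α, then ⟦s⟧_α ≻ ⟦t⟧_α for every valuation α whenever s rewrites innermost to t. -/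
/-- Applicative simply-typed terms over function symbols `Fn` (with types
given by `tyF`) and type-indexed variables `V`. -/
inductive Tm {B : Type} (Fn : Type) (tyF : Fn → Ty B) (V : Ty B → Type) :
    Ty B → Type
  | fn (f : Fn) : Tm Fn tyF V (tyF f)
  | var {σ : Ty B} (x : V σ) : Tm Fn tyF V σ
  | app {σ τ : Ty B} :
      Tm Fn tyF V (Ty.arrow σ τ) → Tm Fn tyF V σ → Tm Fn tyF V τ

variable {B : Type} {Fn : Type} {tyF : Fn → Ty B} {V : Ty B → Type}

/-- Applying a substitution `γ` (mapping variables to terms of the same type)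
to a term. -/
def subst (γ : ∀ σ, V σ → Tm Fn tyF V σ) :
    ∀ {σ : Ty B}, Tm Fn tyF V σ → Tm Fn tyF V σ
  | _, .fn f => .fn f
  | _, .var x => γ _ x
  | _, .app s t => .app (subst γ s) (subst γ t)

/-- Term interpretation: variables via the valuation `α`, function symbols via
`J`, application via semantic application. -/
def eval (K : B → ℕ) (J : ∀ f : Fn, Interp K (tyF f))
    (α : ∀ σ, V σ → Interp K σ) :
    ∀ {σ : Ty B}, Tm Fn tyF V σ → Interp K σ
  | _, .fn f => J f
  | _, .var x => α _ x
  | _, .app s t => semApp K (eval K J α s) (eval K J α t)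

/-- The (unrestricted) rewrite relation generated by the rule set `R`:
closure of rule instances under application contexts. -/
inductive Rew (R : ∀ σ : Ty B, Tm Fn tyF V σ → Tm Fn tyF V σ → Prop) :
    ∀ σ : Ty B, Tm Fn tyF V σ → Tm Fn tyF V σ → Prop
  | rule {σ : Ty B} {l r : Tm Fn tyF V σ} (γ : ∀ σ, V σ → Tm Fn tyF V σ) :
      R σ l r → Rew R σ (subst γ l) (subst γ r)
  | appL {σ τ : Ty B} {s s' : Tm Fn tyF V (Ty.arrow σ τ)} {t : Tm Fn tyF V σ} :
      Rew R (Ty.arrow σ τ) s s' → Rew R τ (s.app t) (s'.app t)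
  | appR {σ τ : Ty B} {s : Tm Fn tyF V (Ty.arrow σ τ)} {t t' : Tm Fn tyF V σ} :
      Rew R σ t t' → Rew R τ (s.app t) (s.app t')

/-- `s` is in `R`-normal form. -/
def NF (R : ∀ σ : Ty B, Tm Fn tyF V σ → Tm Fn tyF V σ → Prop)
    {σ : Ty B} (s : Tm Fn tyF V σ) : Prop :=
  ∀ t : Tm Fn tyF V σ, ¬ Rew R σ s t

/-- `Subtm u s`: `u` is a (not necessarily proper) subterm of `s`. -/
inductive Subtm : ∀ {σ τ : Ty B}, Tm Fn tyF V σ → Tm Fn tyF V τ → Prop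
  | refl {σ : Ty B} (s : Tm Fn tyF V σ) : Subtm s s
  | appL {ρ σ τ : Ty B} {u : Tm Fn tyF V ρ}
      {s : Tm Fn tyF V (Ty.arrow σ τ)} {t : Tm Fn tyF V σ} :
      Subtm u s → Subtm u (s.app t)
  | appR {ρ σ τ : Ty B} {u : Tm Fn tyF V ρ}
      {s : Tm Fn tyF V (Ty.arrow σ τ)} {t : Tm Fn tyF V σ} :
      Subtm u t → Subtm u (s.app t)

/-- `PSubtm u s`: `u` is a proper subterm of `s`. -/
inductive PSubtm : ∀ {σ τ : Ty B}, Tm Fn tyF V σ → Tm Fn tyF V τ → Prop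
  | appL {ρ σ τ : Ty B} {u : Tm Fn tyF V ρ}
      {s : Tm Fn tyF V (Ty.arrow σ τ)} {t : Tm Fn tyF V σ} :
      Subtm u s → PSubtm u (s.app t)
  | appR {ρ σ τ : Ty B} {u : Tm Fn tyF V ρ}
      {s : Tm Fn tyF V (Ty.arrow σ τ)} {t : Tm Fn tyF V σ} :
      Subtm u t → PSubtm u (s.app t)

/-- The innermost rewrite relation: a rule instance `ℓγ → rγ` may only be
contracted when all proper subterms of `ℓγ` are in `R`-normal form; closed
under application contexts. -/
inductive IRew (R : ∀ σ : Ty B, Tm Fn tyF V σ → Tm Fn tyF V σ → Prop) :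
    ∀ σ : Ty B, Tm Fn tyF V σ → Tm Fn tyF V σ → Prop
  | rule {σ : Ty B} {l r : Tm Fn tyF V σ} (γ : ∀ σ, V σ → Tm Fn tyF V σ) :
      R σ l r →
      (∀ (ρ : Ty B) (u : Tm Fn tyF V ρ), PSubtm u (subst γ l) → NF R u) →
      IRew R σ (subst γ l) (subst γ r)
  | appL {σ τ : Ty B} {s s' : Tm Fn tyF V (Ty.arrow σ τ)} {t : Tm Fn tyF V σ} :
      IRew R (Ty.arrow σ τ) s s' → IRew R τ (s.app t) (s'.app t)
  | appR {σ τ : Ty B} {s : Tm Fn tyF V (Ty.arrow σ τ)} {t t' : Tm Fn tyF V σ} :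
      IRew R σ t t' → IRew R τ (s.app t) (s.app t')

lemma eval_subst (K : B → ℕ) (J : ∀ f : Fn, Interp K (tyF f))
    (α : ∀ σ, V σ → Interp K σ) (γ : ∀ σ, V σ → Tm Fn tyF V σ)
    {σ : Ty B} (s : Tm Fn tyF V σ) :
    eval K J α (subst γ s) =
      eval K J (fun σ x => eval K J α (γ σ x)) s := by
  induction s with
  | fn f => rfl
  | var x => rfl
  | app a b iha ihb => simp [subst, eval, iha, ihb]

/-- Innermost Compatibility Theorem: if `⟦ℓ⟧_α ≻ ⟦r⟧_α` for
every rule `ℓ → r ∈ R` and every valuation `α`, then `⟦s⟧_α ≻ ⟦t⟧_α` for every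
valuation `α` whenever `s` rewrites innermost to `t`. -/
theorem innermost_compatibility
    (K : B → ℕ) (J : ∀ f : Fn, Interp K (tyF f))
    (R : ∀ σ : Ty B, Tm Fn tyF V σ → Tm Fn tyF V σ → Prop)
    (hrules : ∀ (σ : Ty B) (l r : Tm Fn tyF V σ), R σ l r →
      ∀ α : ∀ σ, V σ → Interp K σ, succ K σ (eval K J α l) (eval K J α r)) :
    ∀ (α : ∀ σ, V σ → Interp K σ) (σ : Ty B) (s t : Tm Fn tyF V σ),
      IRew R σ s t → succ K σ (eval K J α s) (eval K J α t) := by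
  
  intro α σ s t h
  induction h with
  | rule γ hR _ =>
      rw [eval_subst, eval_subst]
      exact hrules _ _ _ hR _
  | @appL σ τ s s' t _ ih =>
      obtain ⟨h1, h2, h3⟩ := ih
      refine ⟨?_, ?_, ?_⟩
      · simp only [eval, semApp]
        have := (h2 ((eval K J α t).1.2, (eval K J α t).2)).1
        simp only [natQO, ge_iff_le] at this ⊢
        omega
      · exact (h2 ((eval K J α t).1.2, (eval K J α t).2)).2
      · exact h3 _
  | @appR σ τ s t t' _ ih =>
      obtain ⟨h1, h2, h3⟩ := ih
      have hmono := (eval K J α s).1.2.2 ((eval K J α t).1.2, (eval K J α t).2)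
        ((eval K J α t').1.2, (eval K J α t').2) ⟨h2, h3⟩
      refine ⟨?_, hmono.2, (eval K J α s).2.2 _ _ h3⟩
      · simp only [eval, semApp]
        have := hmono.1
        simp only [natQO, prodQO, ge_iff_le] at this
        omega
end
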